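/- arXiv:1111.7142 — 3 statements merged into one kernel-verified Lean document; each statement's English description precedes it below -/
import Mathlib

section
/- The restricted first-return generating function on the empty comb satisfies $P^{(<n)}_\infty(x) = (1-x)\,\frac{(1+\sqrt{x})^{n-1} - (1-\sqrt{x})^{n-1}}{(1+\sqrt{x})^{n} - (1-\sqrt{x})^{n}}$ for all $n \geq 1$ and $0 < x < 1$. -/
/-! With `a = 1 + √x` and `b = 1 - √x` we have `a + b = 2` and `a * b = 1 - x`, so the recursion
reads `Q (n + 1) = a b / (a + b - Q n)`. The differences `D n = a ^ n - b ^ n` satisfy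
`D (n + 2) = (a + b) D (n + 1) - a b D n`, which is exactly the statement that `a b D (n - 1) / D n`
solves this recursion; `|b| < a` keeps every `D n` with `n ≥ 1` nonzero. -/

section ContinuedFraction

variable {K : Type*} [Field K]

theorem pow_sub_pow_add_two (a b : K) (n : ℕ) :
    a ^ (n + 2) - b ^ (n + 2) =
      (a + b) * (a ^ (n + 1) - b ^ (n + 1)) - a * b * (a ^ n - b ^ n) := by
  ring

theorem eq_mul_pow_sub_pow_div_of_continuedFraction (a b : K)
    (hab : ∀ n : ℕ, a ^ (n + 1) ≠ b ^ (n + 1))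
    (Q : ℕ → K) (hQ1 : Q 1 = 0)
    (hQrec : ∀ n : ℕ, 1 ≤ n → Q (n + 1) = a * b / (a + b - Q n))
    (n : ℕ) : Q (n + 1) = a * b * ((a ^ n - b ^ n) / (a ^ (n + 1) - b ^ (n + 1))) := by
  induction n with
  | zero => simp [hQ1]
  | succ n ih =>
    have hD₁ : a ^ (n + 1) - b ^ (n + 1) ≠ 0 := sub_ne_zero.mpr (hab n)
    have hD₂ : a ^ (n + 2) - b ^ (n + 2) ≠ 0 := sub_ne_zero.mpr (hab (n + 1))
    have hdenom :
        a + b - Q (n + 1) = (a ^ (n + 2) - b ^ (n + 2)) / (a ^ (n + 1) - b ^ (n + 1)) := by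
      rw [ih, pow_sub_pow_add_two]
      field_simp
    rw [hQrec (n + 1) (Nat.le_add_left 1 n), hdenom, div_div_eq_mul_div, mul_div_assoc]

end ContinuedFraction

theorem pow_ne_pow_of_abs_lt {R : Type*} [Ring R] [LinearOrder R] [IsStrictOrderedRing R] {a b : R}
    (h : |b| < a) {n : ℕ} (hn : n ≠ 0) : a ^ n ≠ b ^ n := by
  refine (lt_of_le_of_lt ?_ (pow_lt_pow_left₀ h (abs_nonneg b) hn)).ne'
  exact (le_abs_self _).trans (abs_pow b n).le

theorem abs_one_sub_lt_one_add {s : ℝ} (hs : 0 < s) : |1 - s| < 1 + s :=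
  abs_sub_lt_iff.mpr ⟨by linarith, by linarith⟩

theorem restricted_first_return_closed_form_general (x : ℝ) (hx0 : 0 < x)
    (Q : ℕ → ℝ) (hQ1 : Q 1 = 0)
    (hQrec : ∀ n : ℕ, 1 ≤ n → Q (n + 1) = (1 - x) / (2 - Q n)) :
    ∀ n : ℕ, 1 ≤ n →
      Q n = (1 - x) *
          (((1 + Real.sqrt x) ^ (n - 1) - (1 - Real.sqrt x) ^ (n - 1)) /
            ((1 + Real.sqrt x) ^ n - (1 - Real.sqrt x) ^ n)) := by
  have hprod : (1 + Real.sqrt x) * (1 - Real.sqrt x) = 1 - x := by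
    linear_combination -Real.mul_self_sqrt hx0.le
  have hsum : (1 + Real.sqrt x) + (1 - Real.sqrt x) = 2 := by ring
  have hroots : ∀ n : ℕ, (1 + Real.sqrt x) ^ (n + 1) ≠ (1 - Real.sqrt x) ^ (n + 1) := fun n =>
    pow_ne_pow_of_abs_lt (abs_one_sub_lt_one_add (Real.sqrt_pos.mpr hx0)) n.succ_ne_zero
  have hQrec' : ∀ n : ℕ, 1 ≤ n → Q (n + 1) =
      (1 + Real.sqrt x) * (1 - Real.sqrt x) / ((1 + Real.sqrt x) + (1 - Real.sqrt x) - Q n) := by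
    intro n hn
    rw [hprod, hsum, hQrec n hn]
  intro n hn
  obtain ⟨m, rfl⟩ := Nat.exists_eq_add_of_le' hn
  rw [Nat.add_sub_cancel, ← hprod]
  exact eq_mul_pow_sub_pow_div_of_continuedFraction _ _ hroots Q hQ1 hQrec' m

/-- On the half-line `N∞`, the restricted first-return generating functions, defined
by the recursion `P^{(<n+1)}(x) = (1-x)/(2 - P^{(<n)}(x))` with `P^{(<1)}(x) = 0`,
satisfy `P^{(<n)}(x) = (1-x)((1+√x)^{n-1} - (1-√x)^{n-1})/((1+√x)^n - (1-√x)^n)`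
for all `n ≥ 1` and `0 < x < 1`. -/
theorem restricted_first_return_closed_form (x : ℝ) (hx0 : 0 < x) (hx1 : x < 1)
    (Q : ℕ → ℝ) (hQ1 : Q 1 = 0)
    (hQrec : ∀ n : ℕ, 1 ≤ n → Q (n + 1) = (1 - x) / (2 - Q n)) :
    ∀ n : ℕ, 1 ≤ n →
      Q n = (1 - x) *
          (((1 + Real.sqrt x) ^ (n - 1) - (1 - Real.sqrt x) ^ (n - 1)) /
            ((1 + Real.sqrt x) ^ n - (1 - Real.sqrt x) ^ n)) :=
  restricted_first_return_closed_form_general x hx0 Q hQ1 hQrec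
end

section
/- The modified two-point function on the empty comb satisfies $G^{(0)}_\infty(x;n) = (1-x)^{n/2}\,\frac{2\sqrt{x}}{(1+\sqrt{x})^n - (1-\sqrt{x})^n}$, and for fixed $x \in (0,1)$ this is a strictly decreasing function of the real variable $n > 0$. -/
/-!
Put `s = √x`, `q = √(1 - x)` and `d k = (1 + s)^k - (1 - s)^k`. Since `1 ± s` are the roots of
`T² - 2T + q²`, the sequence `d` satisfies `d (k+2) = 2 d (k+1) - q² d k`, which turns the
continued-fraction recursion for `v` into `v k = q d k / d (k+1)`; the product then telescopes
to `G n = qⁿ d 1 / d n = qⁿ 2s / d n`.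
For monotonicity write `(1 + s)ᵗ - (1 - s)ᵗ = 2 q^t sinh (t L / 2)` with
`L = log ((1 + s) / (1 - s)) > 0`: the closed form is `s / sinh (t L / 2)`.
-/

open Finset Real

def combDenom (s : ℝ) (k : ℕ) : ℝ := (1 + s) ^ k - (1 - s) ^ k

lemma combDenom_one (s : ℝ) : combDenom s 1 = 2 * s := by
  simp only [combDenom]; ring

lemma combDenom_add_two (s : ℝ) (k : ℕ) :
    combDenom s (k + 2) = 2 * combDenom s (k + 1) - (1 - s * s) * combDenom s k := by
  simp only [combDenom]; ring

lemma combDenom_pos {s : ℝ} (hs : 0 < s) {k : ℕ} (hk : k ≠ 0) : 0 < combDenom s k := by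
  have habs : |1 - s| < 1 + s := abs_sub_lt_iff.mpr ⟨by linarith, by linarith⟩
  refine sub_pos.mpr ?_
  calc (1 - s) ^ k ≤ |1 - s| ^ k := (le_abs_self _).trans (abs_pow _ _).le
    _ < (1 + s) ^ k := pow_lt_pow_left₀ habs (abs_nonneg _) hk

lemma eq_mul_combDenom_div_of_recurrence {s q : ℝ} {v : ℕ → ℝ} (hs : 0 < s)
    (hq : q * q = 1 - s * s) (hv1 : v 1 = q / 2)
    (hvrec : ∀ k, 1 ≤ k → v (k + 1) = q / 2 / (1 - q / 2 * v k)) :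
    ∀ k, 1 ≤ k → v k = q * combDenom s k / combDenom s (k + 1) := by
  refine Nat.le_induction ?_ fun k hk ih => ?_
  · rw [hv1, combDenom_one, combDenom_add_two, combDenom_one]
    simp only [combDenom, pow_zero, sub_self]
    field_simp
    ring
  · have hd := (combDenom_pos hs (k := k + 1) (by omega)).ne'
    have hden : 1 - q / 2 * v k = combDenom s (k + 2) / (2 * combDenom s (k + 1)) := by
      rw [ih, combDenom_add_two, ← hq]
      field_simp
    rw [hvrec k hk, hden]
    field_simp

lemma prod_Icc_eq_of_eq_mul_div {q : ℝ} {v f : ℕ → ℝ} (hf : ∀ k, 1 ≤ k → f k ≠ 0)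
    (hv : ∀ k, 1 ≤ k → v k = q * f k / f (k + 1)) (m : ℕ) :
    ∏ k ∈ Icc 1 m, v k = q ^ m * f 1 / f (m + 1) := by
  induction m with
  | zero => simp [div_self (hf 1 le_rfl)]
  | succ m ih =>
    rw [prod_Icc_succ_top (by omega), ih, hv (m + 1) (by omega)]
    have := hf (m + 1) (by omega)
    field_simp
    ring

lemma rpow_natCast_div_two {a : ℝ} (ha : 0 ≤ a) (n : ℕ) :
    a ^ ((n : ℝ) / 2) = (a ^ ((1 : ℝ) / 2)) ^ n := by
  rw [← Real.rpow_natCast, ← Real.rpow_mul ha]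
  ring_nf

lemma rpow_sub_rpow_eq_mul_sinh {a b : ℝ} (ha : 0 < a) (hb : 0 < b) (t : ℝ) :
    a ^ t - b ^ t = 2 * (a * b) ^ (t / 2) * sinh (t * log (a / b) / 2) := by
  rw [rpow_def_of_pos ha, rpow_def_of_pos hb, rpow_def_of_pos (mul_pos ha hb), sinh_eq,
    log_mul ha.ne' hb.ne', log_div ha.ne' hb.ne']
  rw [mul_comm 2, mul_assoc, mul_div_cancel₀ _ two_ne_zero, mul_sub, ← exp_add, ← exp_add]
  ring_nf

lemma closedForm_eq_div_sinh {x : ℝ} (hx0 : 0 < x) (hx1 : x < 1) (t : ℝ) :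
    (1 - x) ^ (t / 2) * (2 * √x) / ((1 + √x) ^ t - (1 - √x) ^ t)
      = √x / sinh (t * log ((1 + √x) / (1 - √x)) / 2) := by
  have hs1 : √x < 1 := by simpa using Real.sqrt_lt_sqrt hx0.le hx1
  have hprod : (1 + √x) * (1 - √x) = 1 - x := by
    linear_combination -Real.mul_self_sqrt hx0.le
  rw [rpow_sub_rpow_eq_mul_sinh (by positivity) (by linarith), hprod]
  have := (Real.rpow_pos_of_pos (sub_pos.mpr hx1) (t / 2)).ne'
  field_simp

lemma strictAntiOn_div_sinh {c L : ℝ} (hc : 0 < c) (hL : 0 < L) :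
    StrictAntiOn (fun t => c / sinh (t * L / 2)) (Set.Ioi 0) := by
  intro p hp r _ hpr
  exact div_lt_div_of_pos_left hc (sinh_pos_iff.mpr (by simp at hp; positivity))
    (sinh_lt_sinh.mpr (by gcongr))

/-- The modified two-point function on the empty comb (the half-line `N∞`):
`G⁰_∞(x;n)` is the generating function for walks from the root reaching vertex `n`
for the first time without revisiting the root.  It is characterized by
`G⁰_∞(x;n) = (1-x)^{1/2} ∏_{k=1}^{n-1} v_k` where `v_k`, the passage generating
function from `k` to `k+1` for the walk killed at the root, satisfies
`v_1 = (1-x)^{1/2}/2` and `v_{k+1} = ((1-x)^{1/2}/2)/(1 - ((1-x)^{1/2}/2) v_k)`.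
Then `G⁰_∞(x;n) = (1-x)^{n/2} · 2√x / ((1+√x)^n - (1-√x)^n)`, and for fixed
`x ∈ (0,1)` this closed form is a strictly decreasing function of real `n > 0`. -/
theorem modified_two_point_empty_comb (x : ℝ) (hx0 : 0 < x) (hx1 : x < 1)
    (v G : ℕ → ℝ)
    (hv1 : v 1 = (1 - x) ^ ((1 : ℝ) / 2) / 2)
    (hvrec : ∀ k : ℕ, 1 ≤ k →
      v (k + 1) = ((1 - x) ^ ((1 : ℝ) / 2) / 2) /
        (1 - ((1 - x) ^ ((1 : ℝ) / 2) / 2) * v k))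
    (hG : ∀ n : ℕ, 1 ≤ n →
      G n = (1 - x) ^ ((1 : ℝ) / 2) * ∏ k ∈ Finset.Icc 1 (n - 1), v k) :
    (∀ n : ℕ, 1 ≤ n →
      G n = (1 - x) ^ ((n : ℝ) / 2) * (2 * Real.sqrt x) /
          ((1 + Real.sqrt x) ^ n - (1 - Real.sqrt x) ^ n)) ∧
    StrictAntiOn
      (fun s : ℝ => (1 - x) ^ (s / 2) * (2 * Real.sqrt x) /
          ((1 + Real.sqrt x) ^ s - (1 - Real.sqrt x) ^ s))
      (Set.Ioi (0 : ℝ)) := by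
  have hs0 : 0 < √x := Real.sqrt_pos.mpr hx0
  have hq : (1 - x) ^ ((1 : ℝ) / 2) * (1 - x) ^ ((1 : ℝ) / 2) = 1 - √x * √x := by
    rw [← Real.sqrt_eq_rpow, Real.mul_self_sqrt (by linarith), Real.mul_self_sqrt hx0.le]
  have hv := eq_mul_combDenom_div_of_recurrence hs0 hq hv1 hvrec
  refine ⟨fun n hn => ?_, ?_⟩
  · obtain ⟨m, rfl⟩ : ∃ m, n = m + 1 := ⟨n - 1, by omega⟩
    rw [hG _ hn, Nat.add_sub_cancel,
      prod_Icc_eq_of_eq_mul_div (fun k hk => (combDenom_pos hs0 (by omega)).ne') hv m,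
      combDenom_one, rpow_natCast_div_two (by linarith), pow_succ, combDenom]
    ring
  · simp_rw [closedForm_eq_div_sinh hx0 hx1]
    refine strictAntiOn_div_sinh hs0 (Real.log_pos ?_)
    have hs1 : √x < 1 := by simpa using Real.sqrt_lt_sqrt hx0.le hx1
    rw [one_lt_div (by linarith)]
    linarith
end

section
/- Let $C'$ be obtained from a comb $C$ by swapping the teeth $T_k$ and $T_{k+1}$ (with $k < n-1$). Then $P^{(<n)}_C(x) > P^{(<n)}_{C'}(x)$ if and only if $P_{T_k}(x) > P_{T_{k+1}}(x)$. -/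
/-!
Write `P l` for `combRestrictedP x l`. For `0 ≤ x ≤ 1` and teeth `≤ 1` every `P l` lies in
`[0, 1)`, so all denominators `3 - t - P l` exceed `1`. Hence `P (t :: l) < P (s :: l')` iff
`t + P l < s + P l'`, a common prefix preserves strict comparisons, and the swap reduces to
`b + P (a :: l) < a + P (b :: l)`. This holds iff `b < a` because `t ↦ P (t :: l)` is a contraction
on `t ≤ 1`: its difference quotients are `(1 - x) / ((3 - s - P l) (3 - t - P l)) < 1`.
-/

noncomputable def combRestrictedP (x : ℝ) : List ℝ → ℝ
  | [] => 0
  | a :: l => (1 - x) / (3 - a - combRestrictedP x l)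

open Set

section

variable {x : ℝ}

lemma combRestrictedP_mem_Ico (hx0 : 0 ≤ x) (hx1 : x ≤ 1) :
    ∀ {l : List ℝ}, (∀ c ∈ l, c ≤ 1) → combRestrictedP x l ∈ Ico 0 1
  | [], _ => by simp [combRestrictedP]
  | t :: l, hl => by
    rw [List.forall_mem_cons] at hl
    obtain ⟨hp0, hp1⟩ := combRestrictedP_mem_Ico hx0 hx1 hl.2
    have hden : 1 < 3 - t - combRestrictedP x l := by linarith [hl.1]
    rw [combRestrictedP]
    exact ⟨div_nonneg (by linarith) (by linarith), (div_lt_one (by linarith)).2 (by linarith)⟩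

lemma combRestrictedP_cons_lt_cons_iff (hx0 : 0 ≤ x) (hx1 : x < 1) {t s : ℝ} {l l' : List ℝ}
    (ht : t ≤ 1) (hs : s ≤ 1) (hl : ∀ c ∈ l, c ≤ 1) (hl' : ∀ c ∈ l', c ≤ 1) :
    combRestrictedP x (t :: l) < combRestrictedP x (s :: l') ↔
      t + combRestrictedP x l < s + combRestrictedP x l' := by
  have hp := (combRestrictedP_mem_Ico hx0 hx1.le hl).2
  have hq := (combRestrictedP_mem_Ico hx0 hx1.le hl').2
  rw [combRestrictedP, combRestrictedP,
    div_lt_div_iff_of_pos_left (by linarith) (by linarith) (by linarith)]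
  constructor <;> intro h <;> linarith

lemma combRestrictedP_append_lt_append_iff (hx0 : 0 ≤ x) (hx1 : x < 1) {m m' : List ℝ}
    (hm : ∀ c ∈ m, c ≤ 1) (hm' : ∀ c ∈ m', c ≤ 1) :
    ∀ {l : List ℝ}, (∀ c ∈ l, c ≤ 1) →
      (combRestrictedP x (l ++ m) < combRestrictedP x (l ++ m') ↔
        combRestrictedP x m < combRestrictedP x m')
  | [], _ => Iff.rfl
  | c :: l, hl => by
    rw [List.forall_mem_cons] at hl
    have hlm : ∀ d ∈ l ++ m, d ≤ 1 := by simpa [or_imp, forall_and] using ⟨hl.2, hm⟩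
    have hlm' : ∀ d ∈ l ++ m', d ≤ 1 := by simpa [or_imp, forall_and] using ⟨hl.2, hm'⟩
    rw [List.cons_append, List.cons_append,
      combRestrictedP_cons_lt_cons_iff hx0 hx1 hl.1 hl.1 hlm hlm', add_lt_add_iff_left,
      combRestrictedP_append_lt_append_iff hx0 hx1 hm hm' hl.2]

lemma strictMonoOn_sub_combRestrictedP_cons (hx0 : 0 ≤ x) (hx1 : x ≤ 1) {l : List ℝ}
    (hl : ∀ c ∈ l, c ≤ 1) :
    StrictMonoOn (fun t => t - combRestrictedP x (t :: l)) (Iic 1) := by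
  intro s hs t ht hst
  obtain ⟨hp0, hp1⟩ := combRestrictedP_mem_Ico hx0 hx1 hl
  set p := combRestrictedP x l
  have hDs : 1 < 3 - s - p := by linarith [mem_Iic.1 hs]
  have hDt : 1 < 3 - t - p := by linarith [mem_Iic.1 ht]
  show s - (1 - x) / (3 - s - p) < t - (1 - x) / (3 - t - p)
  have hdiff : (1 - x) / (3 - t - p) - (1 - x) / (3 - s - p) =
      (t - s) * ((1 - x) / ((3 - s - p) * (3 - t - p))) := by
    field_simp
    ring
  have hquot : (1 - x) / ((3 - s - p) * (3 - t - p)) < 1 :=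
    (div_lt_one (by positivity)).2 (by nlinarith)
  nlinarith

end

/-- Swapping two adjacent teeth `T_k` and `T_{k+1}` of a comb `C` (with `k < n-1`)
yields a comb `C'` with `P^{(<n)}_C(x) > P^{(<n)}_{C'}(x)` if and only if
`P_{T_k}(x) > P_{T_{k+1}}(x)`.  (Tooth generating functions take values in `(0,1]`.) -/
theorem comb_swap_adjacent_teeth (x a b : ℝ) (l₁ l₂ : List ℝ)
    (hx0 : 0 < x) (hx1 : x < 1)
    (ha : 0 < a ∧ a ≤ 1) (hb : 0 < b ∧ b ≤ 1)
    (hl : ∀ c ∈ l₁ ++ l₂, 0 < c ∧ c ≤ 1) :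
    combRestrictedP x (l₁ ++ a :: b :: l₂) > combRestrictedP x (l₁ ++ b :: a :: l₂)
      ↔ a > b := by
  have h₁ : ∀ c ∈ l₁, c ≤ 1 := fun c hc => (hl c (List.mem_append_left _ hc)).2
  have h₂ : ∀ c ∈ l₂, c ≤ 1 := fun c hc => (hl c (List.mem_append_right _ hc)).2
  have hal : ∀ c ∈ a :: l₂, c ≤ 1 := List.forall_mem_cons.2 ⟨ha.2, h₂⟩
  have hbl : ∀ c ∈ b :: l₂, c ≤ 1 := List.forall_mem_cons.2 ⟨hb.2, h₂⟩
  rw [gt_iff_lt, gt_iff_lt,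
    combRestrictedP_append_lt_append_iff hx0.le hx1 (List.forall_mem_cons.2 ⟨hb.2, hal⟩)
      (List.forall_mem_cons.2 ⟨ha.2, hbl⟩) h₁,
    combRestrictedP_cons_lt_cons_iff hx0.le hx1 hb.2 ha.2 hal hbl, ← sub_lt_sub_iff]
  exact (strictMonoOn_sub_combRestrictedP_cons hx0.le hx1.le h₂).lt_iff_lt hb.2 ha.2
end
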